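/- Fix ΔV > 0, a threshold offset c ∈ ℝ, and let φ(z) = (√(2π))⁻¹·exp(−z²/2) be the standard normal density. If |c| < σ₁ < σ₂, then ΔV·(1/σ₂)·φ(c/σ₂) < ΔV·(1/σ₁)·φ(c/σ₁); that is, whenever the noise level exceeds the distance |V_th − V − μ| to threshold (so that z² < 1), the approximated flipping-probability sensitivity ΔV·(1/σ)·φ((V_th − V − μ)/σ) is strictly decreasing in σ. Hence increasing the Gaussian noise level σ reduces the sensitivity of the Noisy-LIF flipping probability to small membrane-potential perturbations. -/

import Mathlib

/-- `φ` is the standard normal probability density function. -/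
noncomputable def stdGaussianPDF (z : ℝ) : ℝ :=
  (Real.sqrt (2 * Real.pi))⁻¹ * Real.exp (-z ^ 2 / 2)

/-!
The map `σ ↦ σ⁻¹ φ(c/σ)` has derivative `σ⁻² φ(c/σ) ((c/σ)² − 1)`, using `φ'(z) = −z φ(z)`.
This is negative exactly when `|c| < σ`, so the map is strictly decreasing on `(|c|, ∞)`.
-/

open Set

lemma stdGaussianPDF_pos (z : ℝ) : 0 < stdGaussianPDF z := by
  unfold stdGaussianPDF
  positivity

lemma hasDerivAt_stdGaussianPDF (z : ℝ) :
    HasDerivAt stdGaussianPDF (-z * stdGaussianPDF z) z := by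
  have hexp : HasDerivAt (fun z : ℝ => -z ^ 2 / 2) (-z) z := by
    simpa using ((hasDerivAt_pow 2 z).neg.div_const 2).congr_deriv (by ring : _ = -z)
  refine (hexp.exp.const_mul (Real.sqrt (2 * Real.pi))⁻¹).congr_deriv ?_
  unfold stdGaussianPDF
  ring

lemma hasDerivAt_inv_mul_stdGaussianPDF_div (c : ℝ) {σ : ℝ} (hσ : σ ≠ 0) :
    HasDerivAt (fun σ => σ⁻¹ * stdGaussianPDF (c / σ))
      (σ⁻¹ ^ 2 * stdGaussianPDF (c / σ) * ((c / σ) ^ 2 - 1)) σ := by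
  have hinv : HasDerivAt (fun σ : ℝ => σ⁻¹) (-(σ ^ 2)⁻¹) σ := hasDerivAt_inv hσ
  have hquot : HasDerivAt (fun σ => c / σ) (-c / σ ^ 2) σ := by
    simpa [div_eq_mul_inv, neg_div] using hinv.const_mul c
  refine (hinv.mul ((hasDerivAt_stdGaussianPDF (c / σ)).comp σ hquot)).congr_deriv ?_
  rw [Function.comp_apply]
  field_simp
  ring

lemma strictAntiOn_inv_mul_stdGaussianPDF_div (c : ℝ) :
    StrictAntiOn (fun σ => σ⁻¹ * stdGaussianPDF (c / σ)) (Ioi |c|) := by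
  have hderiv (σ : ℝ) (hσ : σ ∈ Ioi |c|) :=
    hasDerivAt_inv_mul_stdGaussianPDF_div c ((abs_nonneg c).trans_lt hσ).ne'
  refine strictAntiOn_of_deriv_neg (convex_Ioi _)
    (fun σ hσ => (hderiv σ hσ).continuousAt.continuousWithinAt) fun σ hσ => ?_
  rw [interior_Ioi] at hσ
  have hσ0 : 0 < σ := (abs_nonneg c).trans_lt hσ
  have hz : (c / σ) ^ 2 < 1 := by
    rw [div_pow, div_lt_one (pow_pos hσ0 2), ← sq_abs]
    exact pow_lt_pow_left₀ hσ (abs_nonneg c) two_ne_zero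
  rw [(hderiv σ hσ).deriv]
  exact mul_neg_of_pos_of_neg (mul_pos (pow_pos (inv_pos.2 hσ0) 2) (stdGaussianPDF_pos _))
    (sub_neg.2 hz)

/-- When the noise level exceeds the distance `|c| = |V_th − V − μ|` to threshold (so `z² < 1`),
the approximated flipping-probability sensitivity `ΔV·(1/σ)·φ(c/σ)` is strictly decreasing
in `σ`: increasing the Gaussian noise level reduces the sensitivity of the Noisy-LIF flipping
probability to small membrane-potential perturbations. -/
theorem flipping_sensitivity_strict_anti (ΔV c : ℝ) (hΔV : 0 < ΔV)
    (σ₁ σ₂ : ℝ) (h₁ : |c| < σ₁) (h₂ : σ₁ < σ₂) :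
    ΔV * (1 / σ₂) * stdGaussianPDF (c / σ₂) < ΔV * (1 / σ₁) * stdGaussianPDF (c / σ₁) := by
  have key := strictAntiOn_inv_mul_stdGaussianPDF_div c h₁ (h₁.trans h₂) h₂
  simp only [one_div, mul_assoc]
  exact mul_lt_mul_of_pos_left key hΔV
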